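/- Let j > 1, let ρ be a primitive j-th root of unity in ℂ, let e = (e_1, …, e_q) be positive integers with q ≥ 1 none of which is divisible by j (so ρ^{e_i} ≠ 1 for all i), and let N ≥ 0. Then ((N+q)!/N!) · (e_1 ⋯ e_q) · ρ^{e_1 + ⋯ + e_q} · (1/∏_{i=1}^q (1 − ρ^{e_i})) · H_N^{(q)}(0, ρ | e) = j^{−q} · ∑_{r ∈ {0,1,…,j−1}^q} ρ^{−(e_1 r_1 + ⋯ + e_q r_q)} · B_{N+q}^{(q)}(e_1 r_1 + ⋯ + e_q r_q | (j e_1, …, j e_q)). -/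

import Mathlib

open PowerSeries Finset

noncomputable section

/-- Restricted partition function `W(s, d)`: the number of tuples `x` of nonnegative
integers with `∑ i, x i * d i = s`. -/
def restrictedPartition (s : ℕ) (d : List ℕ) : ℕ :=
  Set.ncard {x : Fin d.length → ℕ | ∑ i, x i * d.get i = s}

/-- `(e^{dt} - 1)/(d t)` as a formal power series. -/
def bexpS (d : ℂ) : PowerSeries ℂ :=
  PowerSeries.mk fun k => d ^ k / (Nat.factorial (k + 1) : ℂ)

/-- Nörlund Bernoulli polynomial of higher order `B_n^{(m)}(x | d)`, defined through
the generating function `e^{xt} ∏ d_i t/(e^{d_i t} - 1) = ∑ B_n^{(m)}(x|d) t^n/n!`. -/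
def NBern (n : ℕ) (x : ℂ) (d : List ℂ) : ℂ :=
  (Nat.factorial n : ℂ) *
    PowerSeries.coeff n
      (PowerSeries.rescale x (PowerSeries.exp ℂ) * ((d.map fun di => (bexpS di)⁻¹).prod))

/-- `e^{et} - ρ^e` as a formal power series. -/
def frobS (ρ : ℂ) (e : ℕ) : PowerSeries ℂ :=
  PowerSeries.mk fun k => if k = 0 then 1 - ρ ^ e else (e : ℂ) ^ k / (Nat.factorial k : ℂ)

/-- Higher-order Eulerian (Frobenius) polynomial `H_n^{(q)}(x, ρ | e)`, defined through
the generating function `e^{xt} ∏ (1 - ρ^{e_i})/(e^{e_i t} - ρ^{e_i}) = ∑ H_n t^n/n!`. -/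
def FrobH (n : ℕ) (x ρ : ℂ) (e : List ℕ) : ℂ :=
  (Nat.factorial n : ℂ) *
    PowerSeries.coeff n
      (PowerSeries.rescale x (PowerSeries.exp ℂ) *
        ((e.map fun ei => PowerSeries.C (R := ℂ) (1 - ρ ^ ei) * (frobS ρ ei)⁻¹).prod))

/-- `k_j`, the number of elements of `d` divisible by `j`. -/
def kWeight (j : ℕ) (d : List ℕ) : ℕ := (d.filter fun di => j ∣ di).length

/-- The unit part of the factor `1 - ρ^d e^{-dt}`: if `ρ^d = 1` this factor equals
`t` times the series below, otherwise it equals the series below itself. -/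
def sylFactor (ρ : ℂ) (d : ℕ) : PowerSeries ℂ :=
  if ρ ^ d = 1 then
    PowerSeries.mk fun k => (d : ℂ) * (-(d : ℂ)) ^ k / (Nat.factorial (k + 1) : ℂ)
  else
    PowerSeries.mk fun k =>
      if k = 0 then 1 - ρ ^ d else -ρ ^ d * (-(d : ℂ)) ^ k / (Nat.factorial k : ℂ)

/-- The Sylvester wave `W_j(s, d)`: sum over primitive `j`-th roots of unity `ρ` of the
coefficient of `t^{k_j - 1}` in `t^{k_j} ρ^{-s} e^{st} / ∏ (1 - ρ^{d_i} e^{-d_i t})`. -/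
def SylvesterWave (j : ℕ) (s : ℕ) (d : List ℕ) : ℂ :=
  ∑ ρ ∈ primitiveRoots j ℂ,
    PowerSeries.coeff (kWeight j d - 1)
      ((ρ ^ s)⁻¹ • (PowerSeries.rescale (s : ℂ) (PowerSeries.exp ℂ) *
        ((d.map (sylFactor ρ)).prod)⁻¹))

/-- The prime radical circulator (Ramanujan sum) `Ψ̄_j(s) = ∑_ρ ρ^s` over primitive
`j`-th roots of unity. -/
def primeCirculator (j : ℕ) (s : ℤ) : ℂ :=
  ∑ ρ ∈ primitiveRoots j ℂ, ρ ^ s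

/- ### Auxiliary lemmas -/

lemma algMap_fact (n : ℕ) : (algebraMap ℚ ℂ) (1 / (Nat.factorial n : ℚ)) = 1 / (Nat.factorial n : ℂ) := by
  push_cast
  simp

lemma constantCoeff_bexpS (d : ℂ) : constantCoeff (bexpS d) = 1 := by
  rw [← coeff_zero_eq_constantCoeff_apply]
  simp [bexpS]

lemma bexpS_mul (d : ℂ) : C d * X * bexpS d = rescale d (exp ℂ) - 1 := by
  ext n
  rw [mul_assoc, coeff_C_mul, map_sub, coeff_rescale, coeff_exp, algMap_fact]
  cases n with
  | zero => simp [coeff_zero_eq_constantCoeff_apply]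
  | succ k =>
      rw [coeff_succ_X_mul]
      simp only [bexpS, coeff_mk, coeff_one]
      rw [if_neg (Nat.succ_ne_zero k)]
      rw [pow_succ']
      ring

lemma frobS_eq (ρ : ℂ) (e : ℕ) : frobS ρ e = rescale (e : ℂ) (exp ℂ) - C (ρ ^ e) := by
  ext n
  rw [map_sub, coeff_rescale, coeff_exp, algMap_fact]
  cases n with
  | zero => simp [frobS, coeff_zero_eq_constantCoeff_apply]
  | succ k =>
      simp only [frobS, coeff_mk, coeff_C, if_neg (Nat.succ_ne_zero k)]
      ring

lemma telescope (a b : ℂ) (j : ℕ) :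
    (rescale a (exp ℂ) - C b) *
      ∑ r ∈ range j, C (b ^ (j - 1 - r)) * rescale (a * r) (exp ℂ) =
    rescale (a * j) (exp ℂ) - C (b ^ j) := by
  set f : ℕ → PowerSeries ℂ := fun r => C (b ^ (j - r)) * rescale (a * r) (exp ℂ) with hf
  have key : ∀ r ∈ range j,
      (rescale a (exp ℂ) - C b) * (C (b ^ (j - 1 - r)) * rescale (a * r) (exp ℂ)) =
      f (r + 1) - f r := by
    intro r hr
    rw [Finset.mem_range] at hr
    have h1 : rescale a (exp ℂ) * rescale (a * r) (exp ℂ) =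
        rescale (a * ((r + 1 : ℕ) : ℂ)) (exp ℂ) := by
      rw [exp_mul_exp_eq_exp_add]; congr 1; push_cast; ring
    have h2 : C (b ^ (j - r)) = C (b ^ (j - 1 - r)) * C b := by
      rw [← map_mul, ← pow_succ]; congr 2; omega
    have h3 : j - (r + 1) = j - 1 - r := by omega
    rw [hf]
    simp only [h3]
    rw [h2, ← h1]
    ring
  rw [Finset.mul_sum, Finset.sum_congr rfl key, Finset.sum_range_sub f, hf]
  simp only [Nat.sub_self, pow_zero, map_one, one_mul, Nat.cast_zero, mul_zero, Nat.sub_zero]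
  rw [rescale_zero]
  simp [constantCoeff_exp]

lemma frob_key {ρ : ℂ} {j : ℕ} (hρj : ρ ^ j = 1) (e : ℕ) :
    frobS ρ e * (∑ r ∈ range j, C ((ρ ^ e) ^ (j - 1 - r)) * rescale ((e : ℂ) * r) (exp ℂ)) =
    C ((j * e : ℕ) : ℂ) * X * bexpS ((j * e : ℕ) : ℂ) := by
  rw [frobS_eq, telescope, bexpS_mul]
  have h1 : (ρ ^ e) ^ j = 1 := by rw [← pow_mul, mul_comm, pow_mul, hρj, one_pow]
  rw [h1, map_one]
  congr 2
  push_cast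
  ring

lemma frob_key_inv {ρ : ℂ} {j : ℕ} (hρj : ρ ^ j = 1) {e : ℕ} (he1 : ρ ^ e ≠ 1) :
    (frobS ρ e)⁻¹ * (C ((j * e : ℕ) : ℂ) * X) =
    (∑ r ∈ range j, C ((ρ ^ e) ^ (j - 1 - r)) * rescale ((e : ℂ) * r) (exp ℂ)) *
      (bexpS ((j * e : ℕ) : ℂ))⁻¹ := by
  have hF : frobS ρ e * (frobS ρ e)⁻¹ = 1 := by
    apply PowerSeries.mul_inv_cancel
    rw [← coeff_zero_eq_constantCoeff_apply]
    simp only [frobS, coeff_mk, if_pos rfl]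
    exact sub_ne_zero.mpr (Ne.symm he1)
  have hB : bexpS ((j * e : ℕ) : ℂ) * (bexpS ((j * e : ℕ) : ℂ))⁻¹ = 1 := by
    apply PowerSeries.mul_inv_cancel
    rw [constantCoeff_bexpS]
    exact one_ne_zero
  set S := ∑ r ∈ range j, C ((ρ ^ e) ^ (j - 1 - r)) * rescale ((e : ℂ) * r) (exp ℂ) with hS
  calc (frobS ρ e)⁻¹ * (C ((j * e : ℕ) : ℂ) * X)
      = (frobS ρ e)⁻¹ * ((C ((j * e : ℕ) : ℂ) * X * bexpS ((j * e : ℕ) : ℂ)) *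
          (bexpS ((j * e : ℕ) : ℂ))⁻¹) := by
        rw [mul_assoc (C ((j * e : ℕ) : ℂ) * X), hB, mul_one]
    _ = (frobS ρ e)⁻¹ * ((frobS ρ e * S) * (bexpS ((j * e : ℕ) : ℂ))⁻¹) := by
        rw [frob_key hρj]
    _ = (frobS ρ e * (frobS ρ e)⁻¹) * (S * (bexpS ((j * e : ℕ) : ℂ))⁻¹) := by ring
    _ = S * (bexpS ((j * e : ℕ) : ℂ))⁻¹ := by rw [hF, one_mul]

lemma prod_rescale_exp {ι : Type*} (s : Finset ι) (a : ι → ℂ) :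
    ∏ i ∈ s, rescale (a i) (exp ℂ) = rescale (∑ i ∈ s, a i) (exp ℂ) := by
  induction s using Finset.cons_induction with
  | empty => rw [Finset.prod_empty, Finset.sum_empty, rescale_zero]; simp [constantCoeff_exp]
  | cons i s hi ih => rw [Finset.prod_cons, Finset.sum_cons, ih, exp_mul_exp_eq_exp_add]

lemma list_prod_map {M : Type*} [CommMonoid M] (e : List ℕ) (f : ℕ → M) :
    (e.map f).prod = ∏ i : Fin e.length, f (e.get i) := by
  induction e with
  | nil => simp
  | cons x t ih =>
      simp only [List.map_cons, List.prod_cons, ih]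
      exact (Fin.prod_univ_succ (fun i : Fin (t.length + 1) => f ((x :: t).get i))).symm

lemma list_sum_get (e : List ℕ) : e.sum = ∑ i : Fin e.length, e.get i := by
  induction e with
  | nil => simp
  | cons x t ih =>
      simp only [List.sum_cons, ih]
      exact (Fin.sum_univ_succ (fun i : Fin (t.length + 1) => (x :: t).get i)).symm

lemma final_helper (a b c p r K Jq : ℂ) (hb : b ≠ 0) (hc : c ≠ 0) (hJ : Jq ≠ 0) :
    (a / b) * p * r * c⁻¹ * (b * (c * K)) = Jq⁻¹ * (a * r * ((Jq * p) * K)) := by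
  have h1 : b * b⁻¹ = 1 := mul_inv_cancel₀ hb
  have h2 : c * c⁻¹ = 1 := mul_inv_cancel₀ hc
  have h3 : Jq * Jq⁻¹ = 1 := mul_inv_cancel₀ hJ
  rw [div_eq_mul_inv]
  calc a * b⁻¹ * p * r * c⁻¹ * (b * (c * K))
      = (b * b⁻¹) * ((c * c⁻¹)) * (a * p * r * K) := by ring
    _ = a * p * r * K := by rw [h1, h2]; ring
    _ = (Jq * Jq⁻¹) * (a * p * r * K) := by rw [h3]; ring
    _ = Jq⁻¹ * (a * r * ((Jq * p) * K)) := by ring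

/-- Carlitz's relation between Eulerian and Bernoulli numbers of
higher order. -/
theorem eulerian_bernoulli_relation (j : ℕ) (hj : 1 < j) (ρ : ℂ)
    (hρ : IsPrimitiveRoot ρ j) (e : List ℕ) (hq : 1 ≤ e.length)
    (he : ∀ x ∈ e, 0 < x ∧ ¬ j ∣ x) (N : ℕ) :
    ((Nat.factorial (N + e.length) : ℂ) / (Nat.factorial N : ℂ)) * (e.prod : ℕ) *
        ρ ^ e.sum * ((e.map fun ei => 1 - ρ ^ ei).prod)⁻¹ * FrobH N 0 ρ e =
      ((j : ℂ) ^ e.length)⁻¹ *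
        ∑ r : Fin e.length → Fin j,
          (ρ ^ (∑ i, e.get i * (r i : ℕ)))⁻¹ *
            NBern (N + e.length) ((∑ i, e.get i * (r i : ℕ) : ℕ) : ℂ)
              (e.map fun ei => ((j * ei : ℕ) : ℂ)) := by
  have hone : ρ ^ j = 1 := hρ.pow_eq_one
  have hne : ∀ i : Fin e.length, ρ ^ e.get i ≠ 1 := by
    intro i
    have h := (he _ (e.get_mem i)).2
    simpa [hρ.pow_eq_one_iff_dvd] using h
  -- Step 1: product of the per-factor identities
  have prodkey : (∏ i : Fin e.length, (frobS ρ (e.get i))⁻¹) *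
      (C (∏ i : Fin e.length, ((j * e.get i : ℕ) : ℂ)) * X ^ e.length) =
      (∏ i : Fin e.length,
        ∑ r ∈ range j, C ((ρ ^ e.get i) ^ (j - 1 - r)) * rescale ((e.get i : ℂ) * r) (exp ℂ)) *
      ∏ i : Fin e.length, (bexpS ((j * e.get i : ℕ) : ℂ))⁻¹ := by
    have h := Finset.prod_congr rfl
      (fun (i : Fin e.length) (_ : i ∈ univ) => frob_key_inv hone (hne i))
    rw [Finset.prod_mul_distrib, Finset.prod_mul_distrib, Finset.prod_mul_distrib,
      ← map_prod, Finset.prod_const, Finset.card_univ, Fintype.card_fin] at h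
    exact h
  -- Step 2: expand the product of geometric sums
  have hSprod : (∏ i : Fin e.length,
      ∑ r ∈ range j, C ((ρ ^ e.get i) ^ (j - 1 - r)) * rescale ((e.get i : ℂ) * r) (exp ℂ)) =
      ∑ x : Fin e.length → Fin j,
        C (ρ ^ (∑ i, e.get i * (j - 1 - (x i : ℕ)))) *
          rescale ((∑ i, e.get i * (x i : ℕ) : ℕ) : ℂ) (exp ℂ) := by
    have h1 : ∀ i : Fin e.length,
        (∑ r ∈ range j, C ((ρ ^ e.get i) ^ (j - 1 - r)) *
          rescale ((e.get i : ℂ) * r) (exp ℂ)) =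
        ∑ r : Fin j, C ((ρ ^ e.get i) ^ (j - 1 - (r : ℕ))) *
          rescale ((e.get i : ℂ) * (r : ℕ)) (exp ℂ) := fun i =>
      (Fin.sum_univ_eq_sum_range
        (fun r : ℕ => C ((ρ ^ e.get i) ^ (j - 1 - r)) *
          rescale ((e.get i : ℂ) * r) (exp ℂ)) j).symm
    rw [Finset.prod_congr rfl (fun i _ => h1 i), Fintype.prod_sum]
    refine Finset.sum_congr rfl fun x _ => ?_
    rw [Finset.prod_mul_distrib, ← map_prod, prod_rescale_exp]
    congr 1
    · congr 1
      rw [← Finset.prod_pow_eq_pow_sum]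
      exact Finset.prod_congr rfl fun i _ => by rw [pow_mul]
    · congr 1
      push_cast
      rfl
  -- Step 3: the coefficient identity
  have coeffkey : (∏ i : Fin e.length, ((j * e.get i : ℕ) : ℂ)) *
      (coeff N) (∏ i : Fin e.length, (frobS ρ (e.get i))⁻¹) =
      ∑ x : Fin e.length → Fin j,
        ρ ^ (∑ i, e.get i * (j - 1 - (x i : ℕ))) *
          (coeff (N + e.length)) (rescale ((∑ i, e.get i * (x i : ℕ) : ℕ) : ℂ) (exp ℂ) *
            ∏ i : Fin e.length, (bexpS ((j * e.get i : ℕ) : ℂ))⁻¹) := by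
    have h := congrArg (coeff (N + e.length)) prodkey
    rw [hSprod, Finset.sum_mul, map_sum] at h
    have hL : (∏ i : Fin e.length, (frobS ρ (e.get i))⁻¹) *
        (C (∏ i : Fin e.length, ((j * e.get i : ℕ) : ℂ)) * X ^ e.length) =
        C (∏ i : Fin e.length, ((j * e.get i : ℕ) : ℂ)) *
          ((∏ i : Fin e.length, (frobS ρ (e.get i))⁻¹) * X ^ e.length) := by ring
    rw [hL, coeff_C_mul, coeff_mul_X_pow] at h
    rw [h]
    refine Finset.sum_congr rfl fun x _ => ?_
    rw [mul_assoc, coeff_C_mul]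
  -- Step 4: rewrite FrobH
  have frobH_eq : FrobH N 0 ρ e =
      (Nat.factorial N : ℂ) * ((∏ i : Fin e.length, (1 - ρ ^ e.get i)) *
        (coeff N) (∏ i : Fin e.length, (frobS ρ (e.get i))⁻¹)) := by
    have h1 : rescale (0 : ℂ) (exp ℂ) = 1 := by
      rw [rescale_zero]; simp [constantCoeff_exp]
    rw [FrobH, h1, one_mul,
      list_prod_map e (fun ei => C (1 - ρ ^ ei) * (frobS ρ ei)⁻¹),
      Finset.prod_mul_distrib, ← map_prod, coeff_C_mul]
  -- Step 5: rewrite NBern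
  have nbern_eq : ∀ s : ℕ, NBern (N + e.length) (s : ℂ) (e.map fun ei => ((j * ei : ℕ) : ℂ)) =
      (Nat.factorial (N + e.length) : ℂ) *
        (coeff (N + e.length)) (rescale (s : ℂ) (exp ℂ) *
          ∏ i : Fin e.length, (bexpS ((j * e.get i : ℕ) : ℂ))⁻¹) := by
    intro s
    rw [NBern, List.map_map,
      list_prod_map e ((fun di => (bexpS di)⁻¹) ∘ fun ei => ((j * ei : ℕ) : ℂ))]
    rfl
  -- Step 6: list-to-Fin translations
  have hprodC : ((e.map fun ei => 1 - ρ ^ ei).prod) = ∏ i : Fin e.length, (1 - ρ ^ e.get i) :=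
    list_prod_map e _
  have hnatprod : ((e.prod : ℕ) : ℂ) = ∏ i : Fin e.length, (e.get i : ℂ) := by
    rw [Nat.cast_list_prod, list_prod_map e (fun x => (x : ℂ))]
  have hsumget : ρ ^ e.sum = ρ ^ (∑ i : Fin e.length, e.get i) := by rw [list_sum_get]
  -- nonzero facts
  have hNfac : (Nat.factorial N : ℂ) ≠ 0 := Nat.cast_ne_zero.mpr (Nat.factorial_ne_zero N)
  have hprodne : (∏ i : Fin e.length, (1 - ρ ^ e.get i)) ≠ 0 :=
    Finset.prod_ne_zero_iff.mpr fun i _ => sub_ne_zero.mpr (Ne.symm (hne i))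
  have hj0 : (j : ℂ) ≠ 0 := Nat.cast_ne_zero.mpr (by omega)
  have hjq : ((j : ℂ)) ^ e.length ≠ 0 := pow_ne_zero _ hj0
  have hc : (∏ i : Fin e.length, ((j * e.get i : ℕ) : ℂ)) =
      (j : ℂ) ^ e.length * ∏ i : Fin e.length, (e.get i : ℂ) := by
    push_cast
    rw [Finset.prod_mul_distrib, Finset.prod_const, Finset.card_univ, Fintype.card_fin]
  -- root of unity manipulation
  have hroot : ∀ x : Fin e.length → Fin j,
      (ρ ^ (∑ i, e.get i * ((x i : ℕ)) : ℕ))⁻¹ =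
        ρ ^ (∑ i : Fin e.length, e.get i) * ρ ^ (∑ i, e.get i * (j - 1 - (x i : ℕ))) := by
    intro x
    refine (eq_inv_of_mul_eq_one_right ?_).symm
    rw [← pow_add, ← pow_add]
    have hsum2 : (∑ i, e.get i * (x i : ℕ)) + ((∑ i : Fin e.length, e.get i) +
        (∑ i, e.get i * (j - 1 - (x i : ℕ)))) = (∑ i : Fin e.length, e.get i) * j := by
      rw [← Finset.sum_add_distrib, ← Finset.sum_add_distrib, Finset.sum_mul]
      refine Finset.sum_congr rfl fun i _ => ?_
      have hx : (x i : ℕ) < j := (x i).isLt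
      have hxx : (x i : ℕ) + (1 + (j - 1 - (x i : ℕ))) = j := by omega
      calc e.get i * (x i : ℕ) + (e.get i + e.get i * (j - 1 - (x i : ℕ)))
          = e.get i * ((x i : ℕ) + (1 + (j - 1 - (x i : ℕ)))) := by ring
        _ = e.get i * j := by rw [hxx]
    rw [hsum2, pow_mul, ← pow_mul, mul_comm, pow_mul, hone, one_pow]
  -- Final assembly
  rw [frobH_eq, hprodC, hsumget, hnatprod]
  have hrhs : ∑ x : Fin e.length → Fin j,
      (ρ ^ (∑ i, e.get i * ((x i : ℕ))))⁻¹ *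
        NBern (N + e.length) ((∑ i, e.get i * (x i : ℕ) : ℕ) : ℂ)
          (e.map fun ei => ((j * ei : ℕ) : ℂ)) =
      (Nat.factorial (N + e.length) : ℂ) * ρ ^ (∑ i : Fin e.length, e.get i) *
        ((∏ i : Fin e.length, ((j * e.get i : ℕ) : ℂ)) *
          (coeff N) (∏ i : Fin e.length, (frobS ρ (e.get i))⁻¹)) := by
    rw [coeffkey, Finset.mul_sum]
    refine Finset.sum_congr rfl fun x _ => ?_
    rw [nbern_eq, hroot]
    ring
  rw [hrhs, hc]
  exact final_helper _ _ _ _ _ _ _ hNfac hprodne hjq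
end
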